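/- arXiv:1204.5430 — 4 statements merged into one kernel-verified Lean document; each statement's English description precedes it below -/
import Mathlib

section
/- Let l ≥ 1, q ≥ 1, and let ψ : 𝕊^l → ℝ^q be a C¹ map on the unit sphere 𝕊^l ⊂ ℝ^{l+1}. Define ψ̄ : ℝ^{l+1}∖{0} → ℝ^q by ψ̄(x) = ψ(x/‖x‖). Then for every x ≠ 0 the Hilbert–Schmidt norms of the differentials satisfy ‖Dψ̄(x)‖ = ‖x‖^{-1}·‖Dψ(x/‖x‖)‖, and consequently for every p ≥ 2 and every R > 0 one has the identity in [0,∞]: ∫_{B_R(0)} ‖Dψ̄(x)‖^p dx = (∫_0^R r^{l-p} dr)·(∫_{𝕊^l} ‖Dψ(θ)‖^p dσ(θ)), where dσ is the standard measure on 𝕊^l. -/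
/-!
`ψ̄` is constant on open rays, so `ψ̄ ∘ (c • ·) = ψ̄` away from `0` for every `c > 0`;
differentiating gives `Dψ̄(x) = c • Dψ̄(c • x)`, and `c = ‖x‖⁻¹` yields the scaling of the
Hilbert–Schmidt norm. Hence `‖Dψ̄(x)‖^p = ‖x‖^(-p) ‖Dψ̄(x/‖x‖)‖^p` is a product of a radial and an
angular factor, and the polar decomposition of Lebesgue measure as `σ ⊗ r^l dr`
(`homeomorphUnitSphereProd`) splits the integral over the ball into a radial and a spherical one.
-/

noncomputable def hsNorm {n q : ℕ}
    (T : EuclideanSpace ℝ (Fin n) →L[ℝ] EuclideanSpace ℝ (Fin q)) : ℝ :=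
  Real.sqrt (∑ i, ‖T (EuclideanSpace.single i 1)‖ ^ 2)

open MeasureTheory Metric Set
open scoped ENNReal Manifold

section HilbertSchmidt

variable {n q : ℕ}

lemma hsNorm_nonneg (T : EuclideanSpace ℝ (Fin n) →L[ℝ] EuclideanSpace ℝ (Fin q)) :
    0 ≤ hsNorm T :=
  Real.sqrt_nonneg _

lemma hsNorm_smul (c : ℝ) (T : EuclideanSpace ℝ (Fin n) →L[ℝ] EuclideanSpace ℝ (Fin q)) :
    hsNorm (c • T) = |c| * hsNorm T := by
  simp only [hsNorm, smul_apply, norm_smul, Real.norm_eq_abs, mul_pow, ← Finset.mul_sum]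
  rw [Real.sqrt_mul (sq_nonneg _), Real.sqrt_sq_eq_abs, abs_abs]

lemma continuous_hsNorm : Continuous (hsNorm (n := n) (q := q)) :=
  (continuous_finsetSum _ fun i _ =>
    ((ContinuousLinearMap.apply ℝ _ (EuclideanSpace.single i 1)).continuous.norm.pow 2)).sqrt

end HilbertSchmidt

section Homogeneous

variable {E F : Type*} [NormedAddCommGroup E] [NormedSpace ℝ E]
  [NormedAddCommGroup F] [NormedSpace ℝ F]

lemma apply_smul_eq_self_of_forall_apply_smul_sphere {α : Type*} {f : E → α}
    {g : sphere (0 : E) 1 → α}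
    (hfg : ∀ (y : sphere (0 : E) 1) (c : ℝ), 0 < c → f (c • (y : E)) = g y)
    {c : ℝ} (hc : 0 < c) {z : E} (hz : z ≠ 0) : f (c • z) = f z := by
  have hz' : 0 < ‖z‖ := norm_pos_iff.2 hz
  let y : sphere (0 : E) 1 := ⟨‖z‖⁻¹ • z, by simp [norm_smul, hz'.ne']⟩
  have hcz : c • z = (c * ‖z‖) • (y : E) := by simp [y, smul_smul, hz'.ne']
  have hz_eq : z = ‖z‖ • (y : E) := by simp [y, smul_smul, hz'.ne']
  rw [hcz, hfg y _ (mul_pos hc hz'), hz_eq, hfg y _ hz']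

lemma fderiv_eq_smul_fderiv_smul_of_apply_smul_eq {f : E → F}
    (hf : ∀ c : ℝ, 0 < c → ∀ z : E, z ≠ 0 → f (c • z) = f z) {c : ℝ} (hc : 0 < c) {x : E}
    (hx : x ≠ 0) : fderiv ℝ f x = c • fderiv ℝ f (c • x) := by
  have hloc : (fun z => f (c • z)) =ᶠ[nhds x] f :=
    Filter.eventuallyEq_of_mem (isOpen_compl_singleton.mem_nhds hx) fun z hz => hf c hc z hz
  rw [← fderiv_comp_smul, hloc.fderiv_eq]

lemma hsNorm_fderiv_eq_inv_norm_mul_of_apply_smul_eq {n q : ℕ}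
    {f : EuclideanSpace ℝ (Fin n) → EuclideanSpace ℝ (Fin q)}
    (hf : ∀ c : ℝ, 0 < c → ∀ z, z ≠ 0 → f (c • z) = f z) {x : EuclideanSpace ℝ (Fin n)}
    (hx : x ≠ 0) : hsNorm (fderiv ℝ f x) = ‖x‖⁻¹ * hsNorm (fderiv ℝ f (‖x‖⁻¹ • x)) := by
  have hc : 0 < ‖x‖⁻¹ := inv_pos.2 (norm_pos_iff.2 hx)
  rw [fderiv_eq_smul_fderiv_smul_of_apply_smul_eq hf hc hx, hsNorm_smul, abs_of_pos hc]

end Homogeneous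

lemma lintegral_Ioi_pow_mul_indicator_Iio_rpow_neg (k : ℕ) (p R : ℝ) :
    ∫⁻ r in Ioi 0,
        ENNReal.ofReal (r ^ k) * (Iio R).indicator (fun r => ENNReal.ofReal (r ^ (-p))) r =
      ∫⁻ r in Ioo 0 R, ENNReal.ofReal (r ^ ((k : ℝ) - p)) := by
  simp_rw [← indicator_mul_right (Iio R) (fun r : ℝ => ENNReal.ofReal (r ^ k)),
    lintegral_indicator measurableSet_Iio, Measure.restrict_restrict measurableSet_Iio,
    Iio_inter_Ioi]
  refine setLIntegral_congr_fun measurableSet_Ioo fun r hr => ?_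
  rw [← ENNReal.ofReal_mul (pow_nonneg hr.1.le _), ← Real.rpow_natCast, ← Real.rpow_add hr.1,
    sub_eq_add_neg]

section Polar

variable {E : Type*} [NormedAddCommGroup E] [NormedSpace ℝ E] [Nontrivial E]
  [FiniteDimensional ℝ E] [MeasurableSpace E] [BorelSpace E] (μ : Measure E) [μ.IsAddHaarMeasure]

theorem lintegral_fun_norm_mul_fun_inv_norm_smul_addHaar {f : ℝ → ℝ≥0∞} {g : E → ℝ≥0∞}
    (hf : Measurable f) (hg : Measurable g) :
    ∫⁻ x, f ‖x‖ * g (‖x‖⁻¹ • x) ∂μ =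
      (∫⁻ r in Ioi 0, ENNReal.ofReal (r ^ (Module.finrank ℝ E - 1)) * f r) *
        ∫⁻ θ : sphere (0 : E) 1, g θ ∂μ.toSphere := by
  calc ∫⁻ x, f ‖x‖ * g (‖x‖⁻¹ • x) ∂μ
      = ∫⁻ x : ({0}ᶜ : Set E), f ‖(x : E)‖ * g (‖(x : E)‖⁻¹ • (x : E)) ∂μ.comap (↑) := by
        rw [lintegral_subtype_comap (measurableSet_singleton _).compl
          (fun x => f ‖x‖ * g (‖x‖⁻¹ • x)), restrict_compl_singleton]
    _ = ∫⁻ y : sphere (0 : E) 1 × Ioi (0 : ℝ), g y.1 * f y.2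
          ∂μ.toSphere.prod (.volumeIoiPow (Module.finrank ℝ E - 1)) := by
        rw [← μ.measurePreserving_homeomorphUnitSphereProd.lintegral_comp_emb
          (Homeomorph.measurableEmbedding _)]
        simp [mul_comm]
    _ = _ := by
        have hf' : Measurable fun r : Ioi (0 : ℝ) => f r := hf.comp measurable_subtype_coe
        rw [lintegral_prod_mul (f := fun θ : sphere (0 : E) 1 => g θ)
          (g := fun r : Ioi (0 : ℝ) => f r) (hg.comp measurable_subtype_coe).aemeasurable
          hf'.aemeasurable, mul_comm, Measure.volumeIoiPow,
          lintegral_withDensity_eq_lintegral_mul _ (by fun_prop) hf']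
        congr 1
        exact lintegral_subtype_comap measurableSet_Ioi (fun r => ENNReal.ofReal (r ^ _) * f r)

theorem setLIntegral_ball_rpow_neg_norm_mul_addHaar {g : E → ℝ≥0∞} (hg : Measurable g)
    (p R : ℝ) :
    ∫⁻ x in ball 0 R, ENNReal.ofReal (‖x‖ ^ (-p)) * g (‖x‖⁻¹ • x) ∂μ =
      (∫⁻ r in Ioo 0 R, ENNReal.ofReal (r ^ (((Module.finrank ℝ E - 1 : ℕ) : ℝ) - p))) *
        ∫⁻ θ : sphere (0 : E) 1, g θ ∂μ.toSphere := by
  have hball : ∀ x : E,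
      (ball 0 R).indicator (fun x => ENNReal.ofReal (‖x‖ ^ (-p)) * g (‖x‖⁻¹ • x)) x =
        (Iio R).indicator (fun r => ENNReal.ofReal (r ^ (-p))) ‖x‖ * g (‖x‖⁻¹ • x) := fun x => by
    by_cases hx : ‖x‖ < R <;> simp [indicator, hx]
  rw [← lintegral_indicator measurableSet_ball, funext hball,
    lintegral_fun_norm_mul_fun_inv_norm_smul_addHaar μ (by measurability) hg,
    lintegral_Ioi_pow_mul_indicator_Iio_rpow_neg]

end Polar

theorem energy_of_homogeneous_extension_general (l q : ℕ)
    (ψ : (Metric.sphere (0 : EuclideanSpace ℝ (Fin (l + 1))) 1) → EuclideanSpace ℝ (Fin q))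
    (ψbar : EuclideanSpace ℝ (Fin (l + 1)) → EuclideanSpace ℝ (Fin q))
    (hψbar : ∀ (y : Metric.sphere (0 : EuclideanSpace ℝ (Fin (l + 1))) 1) (c : ℝ), 0 < c →
      ψbar (c • (y : EuclideanSpace ℝ (Fin (l + 1)))) = ψ y) :
    (∀ x : EuclideanSpace ℝ (Fin (l + 1)), x ≠ 0 →
      hsNorm (fderiv ℝ ψbar x) = ‖x‖⁻¹ * hsNorm (fderiv ℝ ψbar (‖x‖⁻¹ • x))) ∧
    ∀ p : ℝ, 2 ≤ p → ∀ R : ℝ, 0 < R →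
      (∫⁻ x in Metric.ball (0 : EuclideanSpace ℝ (Fin (l + 1))) R,
          ENNReal.ofReal (hsNorm (fderiv ℝ ψbar x) ^ p)) =
        (∫⁻ r in Set.Ioo (0 : ℝ) R, ENNReal.ofReal (r ^ ((l : ℝ) - p))) *
        ∫⁻ θ : Metric.sphere (0 : EuclideanSpace ℝ (Fin (l + 1))) 1,
          ENNReal.ofReal (hsNorm (fderiv ℝ ψbar (θ : EuclideanSpace ℝ (Fin (l + 1)))) ^ p)
          ∂(volume : Measure (EuclideanSpace ℝ (Fin (l + 1)))).toSphere := by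
  have hhom : ∀ c : ℝ, 0 < c → ∀ z, z ≠ 0 → ψbar (c • z) = ψbar z := fun c hc z hz =>
    apply_smul_eq_self_of_forall_apply_smul_sphere hψbar hc hz
  have hscale := fun x (hx : x ≠ 0) => hsNorm_fderiv_eq_inv_norm_mul_of_apply_smul_eq hhom hx
  refine ⟨hscale, fun p _ R _ => ?_⟩
  have hg : Measurable fun x => ENNReal.ofReal (hsNorm (fderiv ℝ ψbar x) ^ p) :=
    ((continuous_hsNorm.measurable.comp (measurable_fderiv ℝ ψbar)).pow_const p).ennreal_ofReal
  have hpolar := setLIntegral_ball_rpow_neg_norm_mul_addHaar volume hg p R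
  rw [finrank_euclideanSpace_fin, Nat.add_sub_cancel] at hpolar
  rw [← hpolar]
  refine setLIntegral_congr_fun_ae measurableSet_ball ?_
  filter_upwards [compl_mem_ae_iff.2 (measure_singleton 0)] with x hx _
  have hx0 : 0 ≤ ‖x‖⁻¹ := inv_nonneg.2 (norm_nonneg x)
  rw [hscale x hx, Real.mul_rpow hx0 (hsNorm_nonneg _), ENNReal.ofReal_mul (by positivity),
    Real.inv_rpow (norm_nonneg x), Real.rpow_neg (norm_nonneg x)]

/-- Let `ψ : 𝕊^l → ℝ^q` be `C¹` and let `ψ̄(x) = ψ(x/‖x‖)` be its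
`0`-homogeneous extension. Then `‖Dψ̄(x)‖ = ‖x‖⁻¹ ‖Dψ̄(x/‖x‖)‖` for all `x ≠ 0`
(at points `θ` of the unit sphere, `Dψ̄(θ)` coincides with the differential of `ψ` on
the sphere, extended by `0` in the radial direction, so `‖Dψ̄(θ)‖ = ‖Dψ(θ)‖` in the
Hilbert–Schmidt sense), and consequently for every `p ≥ 2` and `R > 0` one has, in
`[0,∞]`,
`∫_{B_R(0)} ‖Dψ̄‖^p = (∫_0^R r^{l-p} dr) · (∫_{𝕊^l} ‖Dψ(θ)‖^p dσ(θ))`,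
`dσ` being the standard surface measure of the unit sphere. -/
theorem energy_of_homogeneous_extension (l q : ℕ) (hl : 1 ≤ l) (hq : 1 ≤ q)
    [Fact (Module.finrank ℝ (EuclideanSpace ℝ (Fin (l + 1))) = l + 1)]
    (ψ : (Metric.sphere (0 : EuclideanSpace ℝ (Fin (l + 1))) 1) → EuclideanSpace ℝ (Fin q))
    (hψ : ContMDiff (𝓡 l) 𝓘(ℝ, EuclideanSpace ℝ (Fin q)) 1 ψ)
    (ψbar : EuclideanSpace ℝ (Fin (l + 1)) → EuclideanSpace ℝ (Fin q))
    (hψbar : ∀ (y : Metric.sphere (0 : EuclideanSpace ℝ (Fin (l + 1))) 1) (c : ℝ), 0 < c →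
      ψbar (c • (y : EuclideanSpace ℝ (Fin (l + 1)))) = ψ y) :
    (∀ x : EuclideanSpace ℝ (Fin (l + 1)), x ≠ 0 →
      hsNorm (fderiv ℝ ψbar x) = ‖x‖⁻¹ * hsNorm (fderiv ℝ ψbar (‖x‖⁻¹ • x))) ∧
    ∀ p : ℝ, 2 ≤ p → ∀ R : ℝ, 0 < R →
      (∫⁻ x in Metric.ball (0 : EuclideanSpace ℝ (Fin (l + 1))) R,
          ENNReal.ofReal (hsNorm (fderiv ℝ ψbar x) ^ p)) =
        (∫⁻ r in Set.Ioo (0 : ℝ) R, ENNReal.ofReal (r ^ ((l : ℝ) - p))) *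
        ∫⁻ θ : Metric.sphere (0 : EuclideanSpace ℝ (Fin (l + 1))) 1,
          ENNReal.ofReal (hsNorm (fderiv ℝ ψbar (θ : EuclideanSpace ℝ (Fin (l + 1)))) ^ p)
          ∂(volume : Measure (EuclideanSpace ℝ (Fin (l + 1)))).toSphere :=
  energy_of_homogeneous_extension_general l q ψ ψbar hψbar
end

section
/- Let ρ : [0,∞) → [0,∞) be smooth with ρ'(0) = 1 and ρ'' ≥ 0 (hence ρ' ≥ 1), and let σ : [0,∞) → [0,∞) be of hyperbolic type. Then for all 0 < R₁ < R₂ there exists k ≥ 1 such that ρ'(R₁) ≤ (σ_k(R₂) − ρ(R₁))/(R₂ − R₁) ≤ σ_k'(R₂), where σ_k(r) := k^{-1/2} σ(k^{1/2} r). -/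
/-- The rescaled warping function `σ_k(r) = k^{-1/2} σ(k^{1/2} r)`. -/
noncomputable def sigmaK (σ : ℝ → ℝ) (k r : ℝ) : ℝ :=
  (Real.sqrt k)⁻¹ * σ (Real.sqrt k * r)

/-- A smooth function `σ : [0,∞) → [0,∞)` is of *hyperbolic type*. -/
def IsHyperbolicType (σ : ℝ → ℝ) : Prop :=
  ContDiff ℝ (⊤ : ℕ∞) σ ∧ σ 0 = 0 ∧ deriv σ 0 = 1 ∧
    (∀ j : ℕ, iteratedDeriv (2 * j) σ 0 = 0) ∧
    (∀ r : ℝ, 0 < r → 0 < σ r) ∧ (∀ r : ℝ, 0 ≤ r → 0 ≤ σ r) ∧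
    (∀ r : ℝ, 0 ≤ r → 0 ≤ iteratedDeriv 2 σ r) ∧
    (∀ k : ℝ, 1 ≤ k → ∀ r : ℝ, 0 < r → sigmaK σ k r ≤ deriv (sigmaK σ k) r) ∧
    (∀ r : ℝ, 0 < r → Filter.Tendsto (fun k : ℝ => sigmaK σ k r) Filter.atTop Filter.atTop)

/-!
The rescalings satisfy `σ_k' (r) = σ'(√k r) ≥ σ(√k r) = √k σ_k(r)`, the inequality being the case
`k = 1` of `σ_k ≤ σ_k'`. Since `σ_k(R₂) → ∞`, a large `k` makes the secant slope from `(R₁, ρ(R₁))`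
to `(R₂, σ_k(R₂))` at least `ρ'(R₁)`; if moreover `√k (R₂ - R₁) ≥ 1`, that slope is at most
`σ_k(R₂) / (R₂ - R₁) ≤ √k σ_k(R₂) ≤ σ_k'(R₂)` because `ρ(R₁) ≥ 0`.
-/

open Filter Real

section sigmaK

variable {σ : ℝ → ℝ} {k : ℝ}

theorem sqrt_mul_sigmaK (hk : 0 < k) (r : ℝ) : √k * sigmaK σ k r = σ (√k * r) := by
  rw [sigmaK, mul_inv_cancel_left₀ (sqrt_pos.2 hk).ne']

theorem sigmaK_one (r : ℝ) : sigmaK σ 1 r = σ r := by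
  simp [sigmaK]

theorem hasDerivAt_sigmaK {r : ℝ} (hk : 0 < k) (hσ : DifferentiableAt ℝ σ (√k * r)) :
    HasDerivAt (sigmaK σ k) (deriv σ (√k * r)) r := by
  have h := (hσ.hasDerivAt.comp r ((hasDerivAt_id r).const_mul √k)).const_mul (√k)⁻¹
  rwa [mul_one, mul_left_comm, inv_mul_cancel₀ (sqrt_pos.2 hk).ne', mul_one] at h

end sigmaK

namespace IsHyperbolicType

variable {σ : ℝ → ℝ}

theorem differentiable (hσ : IsHyperbolicType σ) : Differentiable ℝ σ :=
  hσ.1.differentiable (by simp)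

theorem le_deriv (hσ : IsHyperbolicType σ) {s : ℝ} (hs : 0 < s) : σ s ≤ deriv σ s := by
  have h := hσ.2.2.2.2.2.2.2.1 1 le_rfl s hs
  rwa [sigmaK_one, (hasDerivAt_sigmaK one_pos (hσ.differentiable _)).deriv, sqrt_one,
    one_mul] at h

theorem sigmaK_nonneg (hσ : IsHyperbolicType σ) (k : ℝ) {r : ℝ} (hr : 0 ≤ r) :
    0 ≤ sigmaK σ k r :=
  mul_nonneg (inv_nonneg.2 (sqrt_nonneg k)) (hσ.2.2.2.2.2.1 _ (by positivity))

theorem sqrt_mul_sigmaK_le_deriv (hσ : IsHyperbolicType σ) {k r : ℝ} (hk : 0 < k)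
    (hr : 0 < r) : √k * sigmaK σ k r ≤ deriv (sigmaK σ k) r := by
  rw [sqrt_mul_sigmaK hk, (hasDerivAt_sigmaK hk (hσ.differentiable _)).deriv]
  exact hσ.le_deriv (by positivity)

theorem tendsto_sigmaK (hσ : IsHyperbolicType σ) {r : ℝ} (hr : 0 < r) :
    Tendsto (fun k => sigmaK σ k r) atTop atTop :=
  hσ.2.2.2.2.2.2.2.2 r hr

end IsHyperbolicType

theorem slope_condition_for_gluing_general (ρ σ : ℝ → ℝ)
    (hρnonneg : ∀ r : ℝ, 0 ≤ r → 0 ≤ ρ r)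
    (hσ : IsHyperbolicType σ) :
    ∀ R₁ R₂ : ℝ, 0 < R₁ → R₁ < R₂ →
      ∃ k : ℝ, 1 ≤ k ∧
        deriv ρ R₁ ≤ (sigmaK σ k R₂ - ρ R₁) / (R₂ - R₁) ∧
        (sigmaK σ k R₂ - ρ R₁) / (R₂ - R₁) ≤ deriv (sigmaK σ k) R₂ := by
  intro R₁ R₂ hR₁ hR₁₂
  have hd : 0 < R₂ - R₁ := sub_pos.2 hR₁₂
  have hR₂ : 0 < R₂ := hR₁.trans hR₁₂
  obtain ⟨k, hk, hσk, hsqrtk⟩ := ((eventually_ge_atTop 1).and <|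
    ((hσ.tendsto_sigmaK hR₂).eventually_ge_atTop (ρ R₁ + deriv ρ R₁ * (R₂ - R₁))).and <|
    (tendsto_sqrt_atTop.atTop_mul_const hd).eventually_ge_atTop 1).exists
  refine ⟨k, hk, (le_div_iff₀ hd).2 (by linarith), ?_⟩
  have hσk_nonneg := hσ.sigmaK_nonneg k hR₂.le
  calc (sigmaK σ k R₂ - ρ R₁) / (R₂ - R₁) ≤ sigmaK σ k R₂ / (R₂ - R₁) := by
        gcongr
        linarith [hρnonneg R₁ hR₁.le]
    _ ≤ √k * sigmaK σ k R₂ := by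
        rw [div_le_iff₀ hd]
        nlinarith
    _ ≤ deriv (sigmaK σ k) R₂ := hσ.sqrt_mul_sigmaK_le_deriv (by linarith) hR₂

/-- For `ρ` smooth with `ρ'(0) = 1` and `ρ'' ≥ 0` on `[0,∞)` (hence
`ρ' ≥ 1` there), `ρ ≥ 0` on `[0,∞)`, and `σ` of hyperbolic type, and any `0 < R₁ < R₂`,
one can choose `k ≥ 1` so that
`ρ'(R₁) ≤ (σ_k(R₂) − ρ(R₁))/(R₂ − R₁) ≤ σ_k'(R₂)`. -/
theorem slope_condition_for_gluing (ρ σ : ℝ → ℝ)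
    (hρsmooth : ContDiff ℝ (⊤ : ℕ∞) ρ) (hρ'0 : deriv ρ 0 = 1)
    (hρconv : ∀ r : ℝ, 0 ≤ r → 0 ≤ iteratedDeriv 2 ρ r)
    (hρnonneg : ∀ r : ℝ, 0 ≤ r → 0 ≤ ρ r)
    (hσ : IsHyperbolicType σ) :
    ∀ R₁ R₂ : ℝ, 0 < R₁ → R₁ < R₂ →
      ∃ k : ℝ, 1 ≤ k ∧
        deriv ρ R₁ ≤ (sigmaK σ k R₂ - ρ R₁) / (R₂ - R₁) ∧
        (sigmaK σ k R₂ - ρ R₁) / (R₂ - R₁) ≤ deriv (sigmaK σ k) R₂ :=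
  slope_condition_for_gluing_general ρ σ hρnonneg hσ
end

section
/- Let (N,d) be a metric space and let G be a group acting on N by isometries, such that the action is proper in the following sense: for every p ∈ N and every R > 0, the set {γ ∈ G : B_R(p) ∩ γ·B_R(p) ≠ ∅} is finite, where B_R(p) = {x ∈ N : d(x,p) < R}. Let Γ₀ ⊇ Γ₁ ⊇ Γ₂ ⊇ … be a decreasing sequence of subgroups of G with ⋂_k Γ_k = {1}. Then for every p ∈ N and every R > 0 there exists K such that for all k ≥ K the ball B_R(p) is contained in the Dirichlet domain D_k(p) := {x ∈ N : d(x,p) < d(x, γ·p) for every γ ∈ Γ_k with γ ≠ 1}. -/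
/-!
If `x ∈ B_R(p)` is at least as close to `γ • p` as to `p`, then `d(p, γ • p) < 2R`, so `γ • p`
lies in both `B_{2R}(p)` and `γ • B_{2R}(p)`. By properness only finitely many `γ` can do this,
and each of them other than `1` drops out of `Γ k` for all large `k`, because the filtration
decreases to `{1}`.
-/

open Filter Metric
open scoped Pointwise

theorem Antitone.eventually_notMem_of_notMem_iInter {α ι : Type*} [Preorder ι]
    {s : ι → Set α} (hs : Antitone s) {a : α} (ha : a ∉ ⋂ i, s i) :
    ∀ᶠ i in atTop, a ∉ s i := by
  obtain ⟨i₀, hi₀⟩ : ∃ i, a ∉ s i := by simpa only [Set.mem_iInter, not_forall] using ha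
  filter_upwards [eventually_ge_atTop i₀] with i hi using fun h => hi₀ (hs hi h)

theorem Subgroup.eventually_forall_mem_eq_one_of_antitone {G ι : Type*} [Group G] [Preorder ι]
    {Γ : ι → Subgroup G} (hmono : Antitone Γ) (hinter : (⋂ k, (Γ k : Set G)) = {1})
    {S : Set G} (hS : S.Finite) :
    ∀ᶠ k in atTop, ∀ γ ∈ S, γ ∈ Γ k → γ = 1 := by
  refine hS.eventually_all.2 fun γ _ => ?_
  by_cases hγ : γ = 1
  · exact Eventually.of_forall fun _ _ => hγ
  have hmono' : Antitone fun k => (Γ k : Set G) := fun _ _ hkl => hmono hkl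
  have hγ' : γ ∉ ⋂ k, (Γ k : Set G) := by rwa [hinter]
  filter_upwards [hmono'.eventually_notMem_of_notMem_iInter hγ'] with k hk h
  exact absurd h hk

theorem smul_mem_ball_two_mul_of_dist_le {N G : Type*} [PseudoMetricSpace N] [SMul G N]
    {p x : N} {R : ℝ} {γ : G} (hx : x ∈ ball p R) (hle : dist x (γ • p) ≤ dist x p) :
    γ • p ∈ ball p (2 * R) := by
  rw [mem_ball] at hx ⊢
  calc dist (γ • p) p ≤ dist x (γ • p) + dist x p := dist_triangle_left _ _ _
    _ < 2 * R := by linarith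

theorem ball_inter_smul_ball_nonempty_of_smul_mem {N G : Type*} [PseudoMetricSpace N] [SMul G N]
    {p : N} {r : ℝ} {γ : G} (hr : 0 < r) (hγ : γ • p ∈ ball p r) :
    (ball p r ∩ γ • ball p r).Nonempty :=
  ⟨γ • p, hγ, Set.smul_mem_smul_set (mem_ball_self hr)⟩

theorem ball_subset_dirichlet_domain_of_filtration_general
    {N : Type*} [MetricSpace N] {G : Type*} [Group G] [MulAction G N]
    (hproper : ∀ (p : N) (R : ℝ), 0 < R →
      {γ : G | (Metric.ball p R ∩ γ • Metric.ball p R).Nonempty}.Finite)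
    (Γ : ℕ → Subgroup G) (hmono : Antitone Γ)
    (hinter : (⋂ k, (Γ k : Set G)) = {1}) :
    ∀ (p : N) (R : ℝ), 0 < R → ∃ K : ℕ, ∀ k : ℕ, K ≤ k →
      Metric.ball p R ⊆
        {x : N | ∀ γ ∈ Γ k, γ ≠ 1 → dist x p < dist x (γ • p)} := by
  intro p R hR
  have h2R : 0 < 2 * R := by positivity
  obtain ⟨K, hK⟩ := eventually_atTop.1 <|
    Subgroup.eventually_forall_mem_eq_one_of_antitone hmono hinter (hproper p (2 * R) h2R)
  refine ⟨K, fun k hk x hx γ hγ hγ1 => ?_⟩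
  by_contra! hle
  exact hγ1 <| hK k hk γ
    (ball_inter_smul_ball_nonempty_of_smul_mem h2R (smul_mem_ball_two_mul_of_dist_le hx hle)) hγ

/-- If a group `G` acts by isometries on a metric space `N`, properly in
the sense that each ball meets only finitely many of its translates, and `Γ₀ ⊇ Γ₁ ⊇ …` is
a decreasing sequence of subgroups with trivial intersection, then for every `p` and every
`R > 0` the ball `B_R(p)` is eventually contained in the Dirichlet domain
`D_k(p) = {x : d(x,p) < d(x,γ·p) for all 1 ≠ γ ∈ Γ_k}`. -/
theorem ball_subset_dirichlet_domain_of_filtration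
    {N : Type*} [MetricSpace N] {G : Type*} [Group G] [MulAction G N]
    (hiso : ∀ (γ : G) (x y : N), dist (γ • x) (γ • y) = dist x y)
    (hproper : ∀ (p : N) (R : ℝ), 0 < R →
      {γ : G | (Metric.ball p R ∩ γ • Metric.ball p R).Nonempty}.Finite)
    (Γ : ℕ → Subgroup G) (hmono : Antitone Γ)
    (hinter : (⋂ k, (Γ k : Set G)) = {1}) :
    ∀ (p : N) (R : ℝ), 0 < R → ∃ K : ℕ, ∀ k : ℕ, K ≤ k →
      Metric.ball p R ⊆
        {x : N | ∀ γ ∈ Γ k, γ ≠ 1 → dist x p < dist x (γ • p)} :=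
  ball_subset_dirichlet_domain_of_filtration_general hproper Γ hmono hinter
end

section
/- Let 𝕋² = ℝ²/ℤ² be the flat 2-torus, let M = {[(x₁,x₂)] ∈ 𝕋² : x₁ ∈ [0,1/2] mod 1} (the image in 𝕋² of [0,1/2] × ℝ), a compact manifold with boundary ∂M = {[(x₁,x₂)] : x₁ ∈ {0,1/2} mod 1}. Define f : M → 𝕋² by f([(x₁,x₂)]) = [(3x₁,x₂)] (using the unique representative x₁ ∈ [0,1/2]) and let i : M ↪ 𝕋² be the inclusion. Then f is continuous, f = i on ∂M, the induced homomorphisms f_♯ and i_♯ from π₁(M) to π₁(𝕋²) are conjugate, but f and i are NOT homotopic relative to ∂M. -/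
/-- The flat 2-torus `𝕋² = ℝ²/ℤ²`, modelled as a product of two unit circles
`ℝ/ℤ`. -/
abbrev Torus2 : Type := UnitAddCircle × UnitAddCircle

/-- The compact submanifold-with-boundary `M ⊆ 𝕋²`: points whose first coordinate has a
representative in `[0, 1/2]`. -/
def Mset : Set Torus2 :=
  {p | ∃ x₁ ∈ Set.Icc (0 : ℝ) (1 / 2), ((x₁ : UnitAddCircle) = p.1)}

/-- The boundary `∂M ⊆ 𝕋²`: points whose first coordinate is `0` or `1/2` mod `1`. -/
def bdryMset : Set Torus2 :=
  {p | p.1 = ((0 : ℝ) : UnitAddCircle) ∨ p.1 = ((1 / 2 : ℝ) : UnitAddCircle)}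

/-- The base point `([0],[0]) ∈ M` (it lies on `∂M`). -/
noncomputable def basePt : Mset :=
  ⟨(((0 : ℝ) : UnitAddCircle), ((0 : ℝ) : UnitAddCircle)),
    ⟨0, by constructor <;> norm_num, rfl⟩⟩

/-!
On `M` the map `f` is `([x₁], [x₂]) ↦ ([3x₁], [x₂])` for the representative `x₁ ∈ [0, 1/2]`, and
`([(1 + 2t)x₁], [x₂])` is a homotopy from the inclusion to `f` fixing the base point, so the
induced maps on `π₁` agree. A homotopy relative to `∂M`, however, restricted to the segment
`s ↦ ([s/2], [0])` and projected to the first circle factor, would be a homotopy relative to the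
endpoints between the circle paths `[3s/2]` and `[s/2]`. Their lifts to `ℝ` starting at `0` end
at `3/2 ≠ 1/2`, which the homotopy lifting property of `ℝ → ℝ/ℤ` forbids.
-/

open Set unitInterval

theorem IsCoveringMap.apply_one_eq_of_homotopicRel_comp {E X : Type*} [TopologicalSpace E]
    [TopologicalSpace X] {p : E → X} (cov : IsCoveringMap p) {γ₀ γ₁ : C(I, E)}
    (h₀ : γ₀ 0 = γ₁ 0)
    (h : (ContinuousMap.comp ⟨p, cov.continuous⟩ γ₀).HomotopicRel
      (.comp ⟨p, cov.continuous⟩ γ₁) {0, 1}) :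
    γ₀ 1 = γ₁ 1 :=
  ((cov.homotopicRel_iff_comp ⟨0, .inl rfl, h₀⟩).2 h).fst_eq_snd (.inr rfl)

namespace ContinuousMap.HomotopyRel

variable {W X Y : Type*} [TopologicalSpace W] [TopologicalSpace X] [TopologicalSpace Y]
  {f₀ f₁ : C(X, Y)} {S : Set X}

def precomp (F : f₀.HomotopyRel f₁ S) {T : Set W} (g : C(W, X)) (hg : MapsTo g T S) :
    (f₀.comp g).HomotopyRel (f₁.comp g) T where
  toHomotopy := F.toHomotopy.comp (.refl g)
  prop' t _ hw := F.eq_fst t (hg hw)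

def ofContinuousOn (H : ℝ × X → Y) (hH : ContinuousOn H (Icc 0 1 ×ˢ univ))
    (h₀ : ∀ x, H (0, x) = f₀ x) (h₁ : ∀ x, H (1, x) = f₁ x)
    (hS : ∀ t ∈ Icc (0 : ℝ) 1, ∀ x ∈ S, H (t, x) = f₁ x) : f₀.HomotopyRel f₁ S where
  toFun x := H (x.1, x.2)
  continuous_toFun := hH.comp_continuous (by fun_prop) fun x => ⟨x.1.2, mem_univ _⟩
  map_zero_left := h₀
  map_one_left := h₁
  prop' t x hx := by
    simp only [coe_mk]
    rw [hS t t.2 x hx, ← h₀, hS 0 ⟨le_rfl, zero_le_one⟩ x hx]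

end ContinuousMap.HomotopyRel

namespace Mset

/-- The cut at `-1/4` lies outside `M`, which makes `rep` continuous on `M`. -/
noncomputable def rep (m : Mset) : ℝ := AddCircle.equivIco 1 (-(1 / 4)) (m : Torus2).1

theorem coe_rep (m : Mset) : (rep m : UnitAddCircle) = (m : Torus2).1 :=
  (AddCircle.equivIco 1 (-(1 / 4))).symm_apply_apply _

theorem rep_eq_of_coe_eq {m : Mset} {x : ℝ} (hx : x ∈ Icc (0 : ℝ) (1 / 2))
    (h : (x : UnitAddCircle) = (m : Torus2).1) : rep m = x := by
  have hrep := (AddCircle.equivIco 1 (-(1 / 4)) (m : Torus2).1).2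
  refine (AddCircle.coe_eq_coe_iff_of_mem_Ico hrep ?_).1 ((coe_rep m).trans h.symm)
  constructor <;> linarith [hx.1, hx.2]

@[fun_prop]
theorem continuous_rep : Continuous rep := by
  refine continuous_iff_continuousAt.2 fun m => ?_
  have hm : (m : Torus2).1 ≠ ((-(1 / 4) : ℝ) : UnitAddCircle) := by
    obtain ⟨x, hx, hxm⟩ := m.2
    intro h
    have := (AddCircle.coe_eq_coe_iff_of_mem_Ico (a := -(1 / 4)) (p := (1 : ℝ)) (x := x)
      (by constructor <;> linarith [hx.1, hx.2]) (by norm_num)).1 (hxm.trans h)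
    linarith [hx.1]
  exact continuousAt_subtype_val.comp <| (AddCircle.continuousAt_equivIco 1 _ hm).comp
    (f := fun m : Mset => (m : Torus2).1) (continuous_fst.comp continuous_subtype_val).continuousAt

noncomputable def incl : C(Mset, Torus2) := ⟨Subtype.val, continuous_subtype_val⟩

noncomputable def stretch : C(Mset, Torus2) where
  toFun m := ((3 * rep m : ℝ), (m : Torus2).2)
  continuous_toFun := by fun_prop

theorem rep_basePt : rep basePt = 0 := rep_eq_of_coe_eq (by norm_num) rfl

theorem stretch_basePt : stretch basePt = basePt := by
  rw [stretch, ContinuousMap.coe_mk, rep_basePt, mul_zero]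
  rfl

theorem stretch_eq_of_mem_bdryMset {m : Mset} (hm : (m : Torus2) ∈ bdryMset) :
    stretch m = m := by
  refine Prod.ext ?_ rfl
  change ((3 * rep m : ℝ) : UnitAddCircle) = (m : Torus2).1
  rcases hm with h | h
  · rw [rep_eq_of_coe_eq (by norm_num) h.symm, h, mul_zero]
  · rw [rep_eq_of_coe_eq (by norm_num) h.symm, h, show (3 * (1 / 2) : ℝ) = 1 / 2 + 1 by norm_num,
      AddCircle.coe_add, AddCircle.coe_period, add_zero]

theorem eq_stretch_of_apply {f : Mset → Torus2}
    (hf : ∀ p : Mset, ∃ x₁ ∈ Icc (0 : ℝ) (1 / 2), ∃ x₂ : ℝ,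
      (p : Torus2) = ((x₁ : UnitAddCircle), (x₂ : UnitAddCircle)) ∧
      f p = (((3 * x₁ : ℝ) : UnitAddCircle), (x₂ : UnitAddCircle))) :
    f = stretch := by
  funext p
  obtain ⟨x₁, hx₁, x₂, hp, hfp⟩ := hf p
  simp [hfp, stretch, rep_eq_of_coe_eq hx₁ (by rw [hp]), hp]

noncomputable def stretchHomotopy : incl.HomotopyRel stretch {basePt} where
  toFun x := (((1 + 2 * (x.1 : ℝ)) * rep x.2 : ℝ), (x.2 : Torus2).2)
  continuous_toFun := by fun_prop
  map_zero_left m := by simp [incl, coe_rep]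
  map_one_left m := by norm_num [stretch]
  prop' t m hm := by
    rw [mem_singleton_iff.1 hm]
    change ((((1 + 2 * (t : ℝ)) * rep basePt : ℝ) : UnitAddCircle), _) = _
    rw [rep_basePt, mul_zero]
    rfl

theorem homotopic_map_incl_map_stretch (γ : Path basePt basePt) :
    (γ.map continuous_subtype_val).Homotopic
      ((γ.map stretch.continuous).cast stretch_basePt.symm stretch_basePt.symm) :=
  ⟨stretchHomotopy.precomp γ.toContinuousMap (by rintro s (rfl | rfl) <;> simp)⟩

noncomputable def segment : C(I, Mset) where
  toFun s := ⟨(((s / 2 : ℝ) : UnitAddCircle), ((0 : ℝ) : UnitAddCircle)),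
    ⟨s / 2, ⟨by linarith [s.2.1], by linarith [s.2.2]⟩, rfl⟩⟩
  continuous_toFun := by fun_prop

theorem mapsTo_segment : MapsTo segment {0, 1} (Subtype.val ⁻¹' bdryMset) := by
  rintro s (rfl | rfl) <;> simp [segment, bdryMset]

theorem rep_segment (s : I) : rep (segment s) = s / 2 :=
  rep_eq_of_coe_eq ⟨by linarith [s.2.1], by linarith [s.2.2]⟩ rfl

theorem not_homotopicRel_stretch_incl :
    ¬ stretch.HomotopicRel incl (Subtype.val ⁻¹' bdryMset) := by
  rintro ⟨F⟩
  let G := (F.precomp segment mapsTo_segment).compContinuousMap .fst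
  have key := (AddCircle.isCoveringMap_coe (p := (1 : ℝ))).apply_one_eq_of_homotopicRel_comp
    (γ₀ := ⟨fun s => 3 * s / 2, by fun_prop⟩) (γ₁ := ⟨fun s => s / 2, by fun_prop⟩)
    (by simp) ⟨G.cast ?_ ?_⟩
  · norm_num at key
  · ext s
    simp [stretch, rep_segment, mul_div_assoc]
  · ext s
    simp [incl, segment]

end Mset

/-- Let `M = {[(x₁,x₂)] : x₁ ∈ [0,1/2] mod 1} ⊆ 𝕋²`, let
`f : M → 𝕋²` be `f([(x₁,x₂)]) = [(3x₁,x₂)]` (via the unique representative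
`x₁ ∈ [0,1/2]`), and let `i : M ↪ 𝕋²` be the inclusion. Then `f` is continuous, `f = i`
on `∂M`, the induced homomorphisms `f_♯` and `i_♯` on fundamental groups are conjugate
(expressed by a fixed connecting path `g`, conjugating the image of every loop class),
but `f` and `i` are NOT homotopic relative to `∂M`. -/
theorem torus_counterexample_not_rel_homotopic
    (f : Mset → Torus2)
    (hf : ∀ p : Mset, ∃ x₁ ∈ Set.Icc (0 : ℝ) (1 / 2), ∃ x₂ : ℝ,
      (p : Torus2) = (((x₁ : ℝ) : UnitAddCircle), ((x₂ : ℝ) : UnitAddCircle)) ∧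
      f p = (((3 * x₁ : ℝ) : UnitAddCircle), ((x₂ : ℝ) : UnitAddCircle))) :
    ∃ (hfc : Continuous f) (h₀ : f basePt = (basePt : Torus2)),
      -- `f` agrees with the inclusion on `∂M`
      (∀ p : Mset, (p : Torus2) ∈ bdryMset → f p = (p : Torus2)) ∧
      -- `f_♯` and `i_♯` are conjugate homomorphisms `π₁(M) → π₁(𝕋²)`
      (∃ g : Path ((basePt : Mset) : Torus2) (basePt : Torus2),
        ∀ γ : Path basePt basePt,
          Path.Homotopic
            (g.symm.trans ((γ.map continuous_subtype_val).trans g))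
            ((γ.map hfc).cast h₀.symm h₀.symm)) ∧
      -- but `f` and the inclusion are NOT homotopic relative to `∂M`
      ¬ ∃ H : ℝ × Mset → Torus2,
          ContinuousOn H (Set.Icc (0 : ℝ) 1 ×ˢ (Set.univ : Set Mset)) ∧
          (∀ p : Mset, H (0, p) = f p) ∧
          (∀ p : Mset, H (1, p) = (p : Torus2)) ∧
          (∀ t ∈ Set.Icc (0 : ℝ) 1, ∀ p : Mset,
            (p : Torus2) ∈ bdryMset → H (t, p) = (p : Torus2)) := by
  obtain rfl := Mset.eq_stretch_of_apply hf
  refine ⟨Mset.stretch.continuous, Mset.stretch_basePt, fun _ => Mset.stretch_eq_of_mem_bdryMset,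
    ⟨Path.refl _, fun γ => ?_⟩, ?_⟩
  · rw [Path.refl_symm]
    exact (Path.Homotopic.trans ⟨.reflTrans _⟩ ⟨.transRefl _⟩).trans
      (Mset.homotopic_map_incl_map_stretch γ)
  · rintro ⟨H, hH, h₀, h₁, hbdry⟩
    exact Mset.not_homotopicRel_stretch_incl ⟨.ofContinuousOn H hH h₀ h₁ hbdry⟩
end
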